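/- Let 0 < α < 1. There exists a constant C_α depending only on α such that for all n ≥ 1 and 0 ≤ s ≤ t ≤ 1, |∫ₛᵗ n^α f_n(s,u)(⌈nu⌉ - nu - 1/2) du| ≤ C_α (t - s), where f_n(s,u) = ∫ₛᵘ (u-r)^{α-1}(⌈nr⌉ - nr - 1/2) dr. -/

import Mathlib

/-!
After the substitution `y = n r`, `n ^ α f_n(s, u)` becomes `∫_{ns}^{nu} (nu - y)^(α-1) ψ(y) dy`
with the `1`-periodic mean-zero sawtooth `ψ(y) = 1/2 - {y}`, so it suffices to bound this integral
uniformly. On the last unit interval below `nu` the trivial bound `|ψ| ≤ 1/2` gives `1/(2α)`. On the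
rest the kernel is increasing and bounded by `1`, and integrating by parts against the primitive of
`ψ`, which is periodic with values in `[0, 1/8]`, gives `1/8`. Hence the integrand of the outer
integral is bounded by a constant depending only on `α`.
-/

open MeasureTheory Set intervalIntegral

noncomputable def sawtoothPrimitive (y : ℝ) : ℝ := Int.fract y * (1 - Int.fract y) / 2

lemma abs_half_sub_fract_le (y : ℝ) : |1 / 2 - Int.fract y| ≤ 1 / 2 := by
  have := Int.fract_nonneg y
  have := Int.fract_lt_one y
  rw [abs_le]; constructor <;> linarith

lemma abs_ceil_sub_sub_half_le (y : ℝ) : |(⌈y⌉ : ℝ) - y - 1 / 2| ≤ 1 / 2 := by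
  have := Int.le_ceil y
  have := Int.ceil_lt_add_one y
  rw [abs_le]; constructor <;> linarith

lemma ceil_sub_sub_half_ae_eq :
    (fun y : ℝ => (⌈y⌉ : ℝ) - y - 1 / 2) =ᵐ[volume] fun y => 1 / 2 - Int.fract y := by
  have hnull : volume {y : ℝ | Int.fract y = 0} = 0 :=
    (countable_range ((↑) : ℤ → ℝ)).measure_zero _ |> measure_mono_null
      fun y hy => Int.fract_eq_zero_iff.mp hy
  filter_upwards [measure_eq_zero_iff_ae_notMem.mp hnull] with y hy
  rw [Int.ceil_eq_add_one_sub_fract hy]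
  ring

lemma sawtoothPrimitive_nonneg (y : ℝ) : 0 ≤ sawtoothPrimitive y := by
  have := Int.fract_nonneg y
  have := Int.fract_lt_one y
  unfold sawtoothPrimitive; nlinarith

lemma sawtoothPrimitive_le (y : ℝ) : sawtoothPrimitive y ≤ 1 / 8 := by
  unfold sawtoothPrimitive; nlinarith [sq_nonneg (2 * Int.fract y - 1)]

lemma continuous_sawtoothPrimitive : Continuous sawtoothPrimitive :=
  (ContinuousOn.comp_fract'' (f := fun y : ℝ => y * (1 - y)) (by fun_prop) (by norm_num)).div_const 2

lemma hasDerivWithinAt_sawtoothPrimitive (x : ℝ) :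
    HasDerivWithinAt sawtoothPrimitive (1 / 2 - Int.fract x) (Ioi x) x := by
  set k : ℝ := (⌊x⌋ : ℝ)
  have hpoly : HasDerivAt (fun y => (y - k) * (1 - (y - k)) / 2) (1 / 2 - Int.fract x) x := by
    have h := ((((hasDerivAt_id x).sub_const k).mul
      (((hasDerivAt_id x).sub_const k).const_sub 1))).div_const 2
    refine h.congr_deriv ?_
    simp only [id, ← Int.self_sub_floor, k]; ring
  refine hpoly.hasDerivWithinAt.congr_of_eventuallyEq ?_
    (by simp only [sawtoothPrimitive, ← Int.self_sub_floor, k])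
  filter_upwards [Ioo_mem_nhdsGT (Int.lt_floor_add_one x)] with y hy
  have : ⌊y⌋ = ⌊x⌋ := Int.floor_eq_iff.mpr ⟨(Int.floor_le x).trans hy.1.le, hy.2⟩
  simp only [sawtoothPrimitive, ← Int.self_sub_floor, this, k]

lemma IntervalIntegrable.mul_half_sub_fract {f : ℝ → ℝ} {a b : ℝ}
    (hf : IntervalIntegrable f volume a b) :
    IntervalIntegrable (fun y => f y * (1 / 2 - Int.fract y)) volume a b := by
  have hmeas : AEStronglyMeasurable (fun y : ℝ => 1 / 2 - Int.fract y) :=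
    (measurable_const.sub measurable_fract).aestronglyMeasurable
  have hbdd : ∀ᵐ y : ℝ, ‖1 / 2 - Int.fract y‖ ≤ 1 / 2 :=
    .of_forall abs_half_sub_fract_le
  exact ⟨hf.1.mul_bdd hmeas.restrict (ae_restrict_of_ae hbdd),
    hf.2.mul_bdd hmeas.restrict (ae_restrict_of_ae hbdd)⟩

lemma abs_integral_mul_half_sub_fract_le {g g' : ℝ → ℝ} {a b : ℝ} (hab : a ≤ b)
    (hg : ContinuousOn g (Icc a b)) (hderiv : ∀ x ∈ Ioo a b, HasDerivAt g (g' x) x)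
    (hg' : IntervalIntegrable g' volume a b) (hg'_nonneg : ∀ x ∈ Icc a b, 0 ≤ g' x)
    (hga : 0 ≤ g a) :
    |∫ y in a..b, g y * (1 / 2 - Int.fract y)| ≤ g b / 8 := by
  set G := sawtoothPrimitive
  have hibp : ∫ y in a..b, g y * (1 / 2 - Int.fract y)
      = g b * G b - g a * G a - ∫ y in a..b, g' y * G y :=
    integral_mul_deriv_eq_deriv_mul_of_hasDeriv_right (by rwa [uIcc_of_le hab])
      continuous_sawtoothPrimitive.continuousOn
      (fun x hx => (hderiv x (by simpa [hab] using hx)).hasDerivWithinAt)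
      (fun x _ => hasDerivWithinAt_sawtoothPrimitive x) hg'
      (by simpa using (intervalIntegrable_const (c := (1 : ℝ))).mul_half_sub_fract)
  have hint : IntervalIntegrable (fun y => g' y * G y) volume a b :=
    hg'.mul_continuousOn continuous_sawtoothPrimitive.continuousOn
  have hftc : ∫ y in a..b, g' y = g b - g a :=
    integral_eq_sub_of_hasDerivAt_of_le hab hg hderiv hg'
  have hC_nonneg : 0 ≤ ∫ y in a..b, g' y * G y :=
    integral_nonneg hab fun x hx => mul_nonneg (hg'_nonneg x hx) (sawtoothPrimitive_nonneg x)
  have hC_le : ∫ y in a..b, g' y * G y ≤ (g b - g a) / 8 := by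
    calc ∫ y in a..b, g' y * G y ≤ ∫ y in a..b, g' y * (1 / 8) :=
          integral_mono_on hab hint (hg'.mul_const _) fun x hx =>
            mul_le_mul_of_nonneg_left (sawtoothPrimitive_le x) (hg'_nonneg x hx)
      _ = (g b - g a) / 8 := by rw [intervalIntegral.integral_mul_const, hftc]; ring
  have hgb : 0 ≤ g b := by linarith
  have hGb := sawtoothPrimitive_nonneg b
  have hGa := sawtoothPrimitive_nonneg a
  have hGb' := sawtoothPrimitive_le b
  have hGa' := sawtoothPrimitive_le a
  rw [hibp, abs_le]
  constructor <;> nlinarith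

section RiemannLiouvilleKernel

variable {α : ℝ}

lemma intervalIntegrable_sub_rpow (hα : 0 < α) (v a b : ℝ) :
    IntervalIntegrable (fun y => (v - y) ^ (α - 1)) volume a b := by
  simpa using (intervalIntegrable_rpow' (a := v - a) (b := v - b) (r := α - 1)
    (by linarith)).comp_sub_left v

lemma integral_sub_rpow (hα : 0 < α) (a v : ℝ) :
    ∫ y in a..v, (v - y) ^ (α - 1) = (v - a) ^ α / α := by
  rw [integral_comp_sub_left (fun y => y ^ (α - 1)) v, integral_rpow (Or.inl (by linarith)),
    sub_add_cancel, sub_self, Real.zero_rpow hα.ne', sub_zero]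

lemma abs_integral_sub_rpow_mul_half_sub_fract_le_rpow (hα : 0 < α) {a v : ℝ} (hav : a ≤ v) :
    |∫ y in a..v, (v - y) ^ (α - 1) * (1 / 2 - Int.fract y)| ≤ (v - a) ^ α / (2 * α) := by
  calc |∫ y in a..v, (v - y) ^ (α - 1) * (1 / 2 - Int.fract y)|
      ≤ |∫ y in a..v, (v - y) ^ (α - 1) * (1 / 2)| := by
        refine norm_integral_le_abs_of_norm_le (E := ℝ) ?_
          ((intervalIntegrable_sub_rpow hα v a v).mul_const _)
        filter_upwards [ae_restrict_mem measurableSet_uIoc] with y hy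
        rw [uIoc_of_le hav] at hy
        have hk : 0 ≤ (v - y) ^ (α - 1) := Real.rpow_nonneg (by linarith [hy.2]) _
        rw [norm_mul, Real.norm_eq_abs, Real.norm_eq_abs, abs_of_nonneg hk]
        exact mul_le_mul_of_nonneg_left (abs_half_sub_fract_le y) hk
    _ = (v - a) ^ α / (2 * α) := by
        rw [intervalIntegral.integral_mul_const, integral_sub_rpow hα a v, abs_of_nonneg (by
          have := Real.rpow_nonneg (sub_nonneg.mpr hav) α; positivity)]
        field_simp

lemma hasDerivAt_sub_rpow {v x : ℝ} (hxv : x < v) :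
    HasDerivAt (fun y => (v - y) ^ (α - 1)) ((1 - α) * (v - x) ^ (α - 2)) x := by
  refine (((hasDerivAt_id x).const_sub v).rpow_const (p := α - 1)
    (Or.inl (sub_pos.mpr hxv).ne')).congr_deriv ?_
  rw [show α - 1 - 1 = α - 2 by ring]; simp only [id]; ring

lemma abs_integral_sub_rpow_mul_half_sub_fract_le_of_lt (hα : α ≤ 1) {a b v : ℝ} (hab : a ≤ b)
    (hbv : b < v) :
    |∫ y in a..b, (v - y) ^ (α - 1) * (1 / 2 - Int.fract y)| ≤ (v - b) ^ (α - 1) / 8 := by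
  have hpos : ∀ x ∈ Icc a b, 0 < v - x := fun x hx => by linarith [hx.2]
  refine abs_integral_mul_half_sub_fract_le hab
    (fun x hx => (hasDerivAt_sub_rpow (by linarith [hpos x hx])).continuousAt.continuousWithinAt)
    (fun x hx => hasDerivAt_sub_rpow (by linarith [hx.2]))
    (ContinuousOn.intervalIntegrable_of_Icc hab fun x hx =>
      (continuousAt_const.mul ((continuousAt_const.sub continuousAt_id).rpow_const
        (Or.inl (hpos x hx).ne'))).continuousWithinAt)
    (fun x hx => mul_nonneg (by linarith) (Real.rpow_nonneg (hpos x hx).le _))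
    (Real.rpow_nonneg (hpos a ⟨le_rfl, hab⟩).le _)

lemma abs_integral_sub_rpow_mul_half_sub_fract_le (hα0 : 0 < α) (hα1 : α ≤ 1) {a v : ℝ}
    (hav : a ≤ v) :
    |∫ y in a..v, (v - y) ^ (α - 1) * (1 / 2 - Int.fract y)| ≤ 1 / 8 + 1 / (2 * α) := by
  have htail : ∀ b, b ≤ v → v - b ≤ 1 →
      |∫ y in b..v, (v - y) ^ (α - 1) * (1 / 2 - Int.fract y)| ≤ 1 / (2 * α) := fun b hbv h1 =>
    (abs_integral_sub_rpow_mul_half_sub_fract_le_rpow hα0 hbv).trans <| by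
      gcongr; exact Real.rpow_le_one (by linarith) h1 hα0.le
  rcases le_or_gt (v - a) 1 with hshort | hlong
  · linarith [htail a hav hshort]
  have hnear : |∫ y in a..v - 1, (v - y) ^ (α - 1) * (1 / 2 - Int.fract y)| ≤ 1 / 8 := by
    simpa using abs_integral_sub_rpow_mul_half_sub_fract_le_of_lt hα1 (by linarith : a ≤ v - 1)
      (by linarith : v - 1 < v)
  have hsplit := integral_add_adjacent_intervals
    ((intervalIntegrable_sub_rpow hα0 v a (v - 1)).mul_half_sub_fract)
    ((intervalIntegrable_sub_rpow hα0 v (v - 1) v).mul_half_sub_fract)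
  rw [← hsplit]
  have hfar := htail (v - 1) (by linarith) (by linarith)
  exact (abs_add_le _ _).trans (add_le_add hnear hfar)

end RiemannLiouvilleKernel

lemma integral_sub_rpow_mul_comp_mul (α : ℝ) (φ : ℝ → ℝ) {m s u : ℝ} (hm : 0 < m)
    (hsu : s ≤ u) :
    ∫ r in s..u, (u - r) ^ (α - 1) * φ (m * r)
      = m ^ (-α) * ∫ y in m * s..m * u, (m * u - y) ^ (α - 1) * φ y := by
  have hscale : ∀ y ∈ uIcc (m * s) (m * u),
      (u - y / m) ^ (α - 1) * φ y = (m * u - y) ^ (α - 1) * φ y / m ^ (α - 1) := by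
    intro y hy
    rw [uIcc_of_le (by gcongr)] at hy
    rw [show u - y / m = (m * u - y) / m by field_simp,
      Real.div_rpow (by linarith [hy.2]) hm.le, div_mul_eq_mul_div]
  have hpow : m ^ (-α) = m⁻¹ / m ^ (α - 1) := by
    rw [← Real.rpow_neg_one, ← Real.rpow_sub hm]; ring_nf
  calc ∫ r in s..u, (u - r) ^ (α - 1) * φ (m * r)
      = ∫ r in s..u, (fun y => (u - y / m) ^ (α - 1) * φ y) (m * r) := by
        simp only [mul_div_cancel_left₀ _ hm.ne']
    _ = m⁻¹ * ∫ y in m * s..m * u, (u - y / m) ^ (α - 1) * φ y := by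
        rw [← smul_eq_mul]
        exact integral_comp_mul_left (fun y => (u - y / m) ^ (α - 1) * φ y) hm.ne'
    _ = m ^ (-α) * ∫ y in m * s..m * u, (m * u - y) ^ (α - 1) * φ y := by
        rw [integral_congr hscale, intervalIntegral.integral_div, hpow]
        ring

lemma abs_rpow_mul_integral_sub_rpow_mul_ceil_le {α m s u : ℝ} (hα0 : 0 < α) (hα1 : α ≤ 1)
    (hm : 0 < m) (hsu : s ≤ u) :
    |m ^ α * ∫ r in s..u, (u - r) ^ (α - 1) * ((⌈m * r⌉ : ℝ) - m * r - 1 / 2)|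
      ≤ 1 / 8 + 1 / (2 * α) := by
  have hsawtooth : ∫ y in m * s..m * u, (m * u - y) ^ (α - 1) * ((⌈y⌉ : ℝ) - y - 1 / 2)
      = ∫ y in m * s..m * u, (m * u - y) ^ (α - 1) * (1 / 2 - Int.fract y) :=
    integral_congr_ae <| ceil_sub_sub_half_ae_eq.mono fun y hy _ => congrArg (_ * ·) hy
  rw [integral_sub_rpow_mul_comp_mul α (fun y => (⌈y⌉ : ℝ) - y - 1 / 2) hm hsu, hsawtooth,
    ← mul_assoc, ← Real.rpow_add hm, add_neg_cancel, Real.rpow_zero, one_mul]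
  exact abs_integral_sub_rpow_mul_half_sub_fract_le hα0 hα1 (by gcongr)

/-- Key deterministic estimate: there is a constant `C_α` such that for all
`n ≥ 1` and `0 ≤ s ≤ t ≤ 1`,
`|∫ₛᵗ n^α f_n(s,u)(⌈nu⌉ - nu - 1/2) du| ≤ C_α (t - s)`, where
`f_n(s,u) = ∫ₛᵘ (u-r)^{α-1}(⌈nr⌉ - nr - 1/2) dr`. -/
theorem norm_increment_bound (α : ℝ) (hα : α ∈ Set.Ioo (0 : ℝ) 1) :
    ∃ C : ℝ, ∀ n : ℕ, 1 ≤ n → ∀ s t : ℝ, 0 ≤ s → s ≤ t → t ≤ 1 →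
      |∫ u in s..t,
          (n : ℝ) ^ α *
            (∫ r in s..u, (u - r) ^ (α - 1) * ((⌈(n : ℝ) * r⌉ : ℝ) - n * r - 1 / 2))
            * ((⌈(n : ℝ) * u⌉ : ℝ) - n * u - 1 / 2)|
        ≤ C * (t - s) := by
  refine ⟨(1 / 8 + 1 / (2 * α)) * (1 / 2), fun n hn s t _ hst _ => ?_⟩
  have hn : (0 : ℝ) < n := by exact_mod_cast hn
  have hbound : ∀ u ∈ uIoc s t, ‖(n : ℝ) ^ α *
      (∫ r in s..u, (u - r) ^ (α - 1) * ((⌈(n : ℝ) * r⌉ : ℝ) - n * r - 1 / 2))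
      * ((⌈(n : ℝ) * u⌉ : ℝ) - n * u - 1 / 2)‖ ≤ (1 / 8 + 1 / (2 * α)) * (1 / 2) := by
    intro u hu
    rw [uIoc_of_le hst] at hu
    rw [Real.norm_eq_abs, abs_mul]
    exact mul_le_mul
      (abs_rpow_mul_integral_sub_rpow_mul_ceil_le hα.1 hα.2.le hn hu.1.le)
      (abs_ceil_sub_sub_half_le _) (abs_nonneg _) (by have := hα.1; positivity)
  simpa [abs_of_nonneg (sub_nonneg.mpr hst)] using norm_integral_le_of_norm_le_const hbound
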